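/- arXiv:2002.05571 — 2 statements merged into one kernel-verified Lean document; each statement's English description precedes it below -/
import Mathlib

section
/- Let μ be a finite nonnegative Borel measure on ℝ, T > 0, σ > 0, r ≥ 0, r̂ := r - σ²/2, x0 ∈ ℝ, and define Ψ(θ,x) := e^{-rθ} ∫ [N(x + r̂θ, σ²θ, y) / N(x0 + r̂T, σ²T, y)] μ(dy). Then Ψ is well defined on (0,T)×ℝ and satisfies the Black-Scholes partial differential equation D₁Ψ(θ,x) = (σ²/2)·D₂₂Ψ(θ,x) + (r - σ²/2)·D₂Ψ(θ,x) - r·Ψ(θ,x) for all (θ,x) ∈ (0,T)×ℝ, where D₁ denotes the partial derivative in θ and D₂, D₂₂ the first and second partial derivatives in x. -/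
open MeasureTheory Filter Set
open scoped ENNReal

/-- Gaussian density with mean `m` and variance `s2`. -/
noncomputable def gauss (m s2 y : ℝ) : ℝ :=
  (Real.sqrt (2 * Real.pi * s2))⁻¹ * Real.exp (-((y - m) ^ 2) / (2 * s2))

/-- The kernel `N(x + r̂θ, σ²θ, y) / N(x0 + r̂T, σ²T, y)` with `r̂ = r - σ²/2`. -/
noncomputable def kern (r σ x0 T θ x y : ℝ) : ℝ :=
  gauss (x + (r - σ ^ 2 / 2) * θ) (σ ^ 2 * θ) y /
    gauss (x0 + (r - σ ^ 2 / 2) * T) (σ ^ 2 * T) y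

/-- The generalised European value function `Ψ`. -/
noncomputable def Psi (r σ x0 T : ℝ) (μ : Measure ℝ) (θ x : ℝ) : ℝ :=
  Real.exp (-(r * θ)) * ∫ y, kern r σ x0 T θ x y ∂μ

/-!
As a function of `(θ, x)`, the numerator `N(x + r̂θ, σ²θ, y)` of the kernel is a Gaussian density
whose variance grows linearly in `θ`; since `∂ₛN = ½ ∂ₘ²N`, the kernel solves
`∂_θ K = (σ²/2) ∂ₓₓK + r̂ ∂ₓK` pointwise in `y`. The denominator has the larger variance `σ²T`, so
for `(θ, x)` in a compact subset of `(0, T) × ℝ` the kernel times `1 + (y - mean)²` is bounded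
uniformly in `y`; as `μ` is finite, this justifies differentiating under the integral sign.
Finally the discount factor `e^{-rθ}` contributes the term `-rΨ`.
-/

noncomputable def gaussScore (m s y : ℝ) : ℝ := (y - m) / s

/-- `∂ₘ² N(m,s,y) = 2 ∂ₛ N(m,s,y) = N(m,s,y) · gaussScore2 m s y`. -/
noncomputable def gaussScore2 (m s y : ℝ) : ℝ := ((y - m) / s) ^ 2 - 1 / s

lemma continuous_gaussScore (m s : ℝ) : Continuous (gaussScore m s) := by
  unfold gaussScore; fun_prop

lemma continuous_gaussScore2 (m s : ℝ) : Continuous (gaussScore2 m s) := by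
  unfold gaussScore2; fun_prop

lemma gauss_pos {s : ℝ} (hs : 0 < s) (m y : ℝ) : 0 < gauss m s y := by
  unfold gauss; positivity

lemma continuous_gauss (m s : ℝ) : Continuous (gauss m s) := by
  unfold gauss; fun_prop

lemma HasDerivAt.gauss {m s : ℝ → ℝ} {m' s' t : ℝ} (hm : HasDerivAt m m' t)
    (hs : HasDerivAt s s' t) (hst : 0 < s t) (y : ℝ) :
    HasDerivAt (fun t => gauss (m t) (s t) y)
      (gauss (m t) (s t) y *
        (m' * gaussScore (m t) (s t) y + s' / 2 * gaussScore2 (m t) (s t) y)) t := by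
  have h2π : 0 < 2 * Real.pi * s t := by positivity
  have hsqrt := ((hs.const_mul (2 * Real.pi)).sqrt h2π.ne').inv (Real.sqrt_pos.2 h2π).ne'
  have hexp := ((((hm.const_sub y).fun_pow 2).fun_neg).fun_div (hs.const_mul 2) (by positivity)).exp
  refine (hsqrt.mul hexp).congr_deriv ?_
  unfold _root_.gauss gaussScore gaussScore2
  have hsq := Real.sq_sqrt h2π.le
  simp only [Pi.inv_apply, Nat.cast_ofNat, pow_one, Nat.add_one_sub_one]
  field_simp
  rw [hsq]
  ring

lemma gauss_div_gauss {s s₀ : ℝ} (hs : 0 < s) (hs₀ : 0 < s₀) (m m₀ y : ℝ) :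
    gauss m s y / gauss m₀ s₀ y
      = √(s₀ / s) * Real.exp ((y - m₀) ^ 2 / (2 * s₀) - (y - m) ^ 2 / (2 * s)) := by
  have h2π : 0 < 2 * Real.pi := by positivity
  unfold gauss
  rw [Real.sqrt_mul h2π.le, Real.sqrt_mul h2π.le, Real.sqrt_div' _ hs.le, Real.exp_sub,
    neg_div, neg_div, Real.exp_neg, Real.exp_neg]
  have := Real.sqrt_pos.2 h2π
  have := Real.sqrt_pos.2 hs
  field_simp

lemma one_add_sq_le_two_mul_exp_abs (v : ℝ) : 1 + v ^ 2 ≤ 2 * Real.exp |v| := by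
  have := Real.quadratic_le_exp_of_nonneg (abs_nonneg v)
  nlinarith [sq_abs v, abs_nonneg v]

lemma neg_mul_sq_add_mul_le {c : ℝ} (hc : 0 < c) (b v : ℝ) :
    -(c * v ^ 2) + b * v ≤ b ^ 2 / (4 * c) := by
  rw [le_div_iff₀ (by positivity)]
  nlinarith [sq_nonneg (2 * c * v - b)]

lemma exists_bound_gauss_div_gauss {s₁ s₂ s₀ : ℝ} (hs₁ : 0 < s₁) (hs₂ : s₂ < s₀) (m₀ D : ℝ) :
    ∃ C, ∀ m s y, s₁ ≤ s → s ≤ s₂ → |m - m₀| ≤ D →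
      (1 + (y - m) ^ 2) * (gauss m s y / gauss m₀ s₀ y) ≤ C := by
  -- With `u = y - m`, the exponent of the ratio is `-c u² + O(|u|)`, and `c > 0` as `s₂ < s₀`.
  set c := 1 / (2 * s₂) - 1 / (2 * s₀)
  set b := D / s₀ + 1
  refine ⟨2 * √(s₀ / s₁) * Real.exp (D ^ 2 / (2 * s₀) + b ^ 2 / (4 * c)),
    fun m s y hs₁s hss₂ hmD => ?_⟩
  have hs : 0 < s := hs₁.trans_le hs₁s
  have hs₀ : 0 < s₀ := by linarith
  have hc : 0 < c := by
    have : 1 / (2 * s₀) < 1 / (2 * s₂) := one_div_lt_one_div_of_lt (by linarith) (by linarith)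
    linarith
  set u := y - m
  have hexponent : |u| + ((y - m₀) ^ 2 / (2 * s₀) - u ^ 2 / (2 * s))
      ≤ D ^ 2 / (2 * s₀) + b ^ 2 / (4 * c) := by
    have hsq : (y - m₀) ^ 2 ≤ u ^ 2 + 2 * D * |u| + D ^ 2 := by
      have hy : y - m₀ = u + (m - m₀) := by ring
      have hud : u * (m - m₀) ≤ |u| * D := (le_abs_self _).trans <| by
        rw [abs_mul]; exact mul_le_mul_of_nonneg_left hmD (abs_nonneg u)
      have hd : (m - m₀) ^ 2 ≤ D ^ 2 := by
        rw [← sq_abs]; exact pow_le_pow_left₀ (abs_nonneg _) hmD 2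
      rw [hy]
      linarith
    have hu : u ^ 2 / (2 * s₂) ≤ u ^ 2 / (2 * s) := by gcongr
    have hquad := neg_mul_sq_add_mul_le hc b |u|
    have : (y - m₀) ^ 2 / (2 * s₀) ≤ (u ^ 2 + 2 * D * |u| + D ^ 2) / (2 * s₀) := by gcongr
    have hexp : (u ^ 2 + 2 * D * |u| + D ^ 2) / (2 * s₀) - u ^ 2 / (2 * s₂) + |u|
        = -(c * |u| ^ 2) + b * |u| + D ^ 2 / (2 * s₀) := by
      simp only [c, b, sq_abs]; field_simp; ring
    linarith
  calc (1 + u ^ 2) * (gauss m s y / gauss m₀ s₀ y)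
      ≤ 2 * Real.exp |u| * (√(s₀ / s₁) * Real.exp ((y - m₀) ^ 2 / (2 * s₀) - u ^ 2 / (2 * s))) := by
        rw [gauss_div_gauss hs hs₀]
        gcongr
        exact one_add_sq_le_two_mul_exp_abs u
    _ = 2 * √(s₀ / s₁) * Real.exp (|u| + ((y - m₀) ^ 2 / (2 * s₀) - u ^ 2 / (2 * s))) := by
        rw [Real.exp_add]; ring
    _ ≤ _ := by gcongr

lemma abs_gaussScore_le {s₁ s : ℝ} (hs₁ : 0 < s₁) (hs : s₁ ≤ s) (m y : ℝ) :
    |gaussScore m s y| ≤ (1 + (y - m) ^ 2) / s₁ := by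
  have hu : |y - m| ≤ 1 + (y - m) ^ 2 := by nlinarith [sq_abs (y - m), sq_nonneg (|y - m| - 1)]
  rw [gaussScore, abs_div, abs_of_pos (hs₁.trans_le hs)]
  exact div_le_div₀ (by positivity) hu hs₁ hs

lemma abs_gaussScore2_le {s₁ s : ℝ} (hs₁ : 0 < s₁) (hs : s₁ ≤ s) (m y : ℝ) :
    |gaussScore2 m s y| ≤ (1 + (y - m) ^ 2) * (1 / s₁ + 1 / s₁ ^ 2) := by
  have h0 : 0 < s := hs₁.trans_le hs
  have h1 : 1 / s ≤ 1 / s₁ := one_div_le_one_div_of_le hs₁ hs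
  have h2 : 1 / s ^ 2 ≤ 1 / s₁ ^ 2 := one_div_le_one_div_of_le (by positivity) (by gcongr)
  have hsq : (y - m) ^ 2 / s ^ 2 ≤ (y - m) ^ 2 / s₁ ^ 2 := by
    simpa only [mul_one_div] using mul_le_mul_of_nonneg_left h2 (sq_nonneg (y - m))
  rw [gaussScore2, div_pow]
  refine (abs_sub _ _).trans ?_
  rw [abs_of_nonneg (by positivity), abs_of_pos (by positivity)]
  have hexpand : (1 + (y - m) ^ 2) * (1 / s₁ + 1 / s₁ ^ 2)
      = (y - m) ^ 2 / s₁ ^ 2 + 1 / s₁ + (1 / s₁ ^ 2 + (y - m) ^ 2 / s₁) := by ring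
  have : 0 ≤ 1 / s₁ ^ 2 + (y - m) ^ 2 / s₁ := by positivity
  linarith

theorem hasDerivAt_integral_of_norm_deriv_le_const {α 𝕜 E : Type*} [MeasurableSpace α]
    {μ : Measure α} [IsFiniteMeasure μ] [RCLike 𝕜] [NormedAddCommGroup E] [NormedSpace ℝ E]
    [NormedSpace 𝕜 E] {F F' : 𝕜 → α → E} {x₀ : 𝕜} {s : Set 𝕜} (hs : s ∈ nhds x₀)
    (hF : ∀ x ∈ s, AEStronglyMeasurable (F x) μ) (hF₀ : Integrable (F x₀) μ)
    (hF' : AEStronglyMeasurable (F' x₀) μ) {C : ℝ} (h_bound : ∀ x ∈ s, ∀ a, ‖F' x a‖ ≤ C)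
    (h_diff : ∀ x ∈ s, ∀ a, HasDerivAt (F · a) (F' x a) x) :
    Integrable (F' x₀) μ ∧ HasDerivAt (fun x => ∫ a, F x a ∂μ) (∫ a, F' x₀ a ∂μ) x₀ :=
  hasDerivAt_integral_of_dominated_loc_of_deriv_le hs (eventually_of_mem hs hF) hF₀ hF'
    (ae_of_all _ fun a x hx => h_bound x hx a) (integrable_const C)
    (ae_of_all _ fun a x hx => h_diff x hx a)

/-- `kern r σ x0 T` is `gaussRatio (σ ^ 2) (r - σ ^ 2 / 2) (x0 + (r - σ ^ 2 / 2) * T) (σ ^ 2 * T)`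
by definition. -/
noncomputable def gaussRatio (a ρ m₀ s₀ t x y : ℝ) : ℝ :=
  gauss (x + ρ * t) (a * t) y / gauss m₀ s₀ y

section gaussRatio

variable {a ρ m₀ s₀ : ℝ}

lemma continuous_gaussRatio (hs₀ : 0 < s₀) (t x : ℝ) : Continuous (gaussRatio a ρ m₀ s₀ t x) :=
  (continuous_gauss _ _).div (continuous_gauss _ _) fun y => (gauss_pos hs₀ m₀ y).ne'

lemma gaussRatio_nonneg (hs₀ : 0 < s₀) (t x y : ℝ) : 0 ≤ gaussRatio a ρ m₀ s₀ t x y := by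
  unfold gaussRatio gauss; positivity

lemma hasDerivAt_gaussRatio_x {t : ℝ} (hat : 0 < a * t) (x y : ℝ) :
    HasDerivAt (fun x => gaussRatio a ρ m₀ s₀ t x y)
      (gaussRatio a ρ m₀ s₀ t x y * gaussScore (x + ρ * t) (a * t) y) x := by
  have := ((hasDerivAt_id x).add_const (ρ * t)).gauss (hasDerivAt_const x (a * t)) hat y
  refine (this.div_const (gauss m₀ s₀ y)).congr_deriv ?_
  simp only [gaussRatio, id]; ring

lemma hasDerivAt_gaussRatio_mul_gaussScore_x {t : ℝ} (hat : 0 < a * t) (x y : ℝ) :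
    HasDerivAt (fun x => gaussRatio a ρ m₀ s₀ t x y * gaussScore (x + ρ * t) (a * t) y)
      (gaussRatio a ρ m₀ s₀ t x y * gaussScore2 (x + ρ * t) (a * t) y) x := by
  have hscore : HasDerivAt (fun x => gaussScore (x + ρ * t) (a * t) y) (-(1 / (a * t))) x := by
    simpa [gaussScore, neg_div] using
      (((hasDerivAt_id x).add_const (ρ * t)).const_sub y).div_const (a * t)
  refine ((hasDerivAt_gaussRatio_x hat x y).mul hscore).congr_deriv ?_
  simp only [gaussScore, gaussScore2]; ring

lemma hasDerivAt_gaussRatio_t (ha : 0 < a) {t : ℝ} (ht : 0 < t) (x y : ℝ) :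
    HasDerivAt (fun t => gaussRatio a ρ m₀ s₀ t x y)
      (gaussRatio a ρ m₀ s₀ t x y *
        (ρ * gaussScore (x + ρ * t) (a * t) y + a / 2 * gaussScore2 (x + ρ * t) (a * t) y)) t := by
  have := (((hasDerivAt_id t).const_mul ρ).const_add x).gauss
    ((hasDerivAt_id t).const_mul a) (by positivity) y
  refine (this.div_const (gauss m₀ s₀ y)).congr_deriv ?_
  simp only [gaussRatio, id, mul_one]; ring

lemma exists_bound_gaussRatio (ha : 0 < a) {t₁ t₂ : ℝ} (ht₁ : 0 < t₁) (ht₂ : a * t₂ < s₀)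
    (X : ℝ) :
    ∃ C, ∀ t ∈ Icc t₁ t₂, ∀ x, |x| ≤ X → ∀ y,
      |gaussRatio a ρ m₀ s₀ t x y| ≤ C ∧
      |gaussRatio a ρ m₀ s₀ t x y * gaussScore (x + ρ * t) (a * t) y| ≤ C ∧
      |gaussRatio a ρ m₀ s₀ t x y * gaussScore2 (x + ρ * t) (a * t) y| ≤ C := by
  have hs₁ : 0 < a * t₁ := mul_pos ha ht₁
  obtain ⟨C₀, hC₀⟩ := exists_bound_gauss_div_gauss hs₁ ht₂ m₀ (X + |ρ| * t₂ + |m₀|)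
  set L := 1 / (a * t₁) + 1 / (a * t₁) ^ 2
  refine ⟨C₀ * (1 + L), fun t ht x hx y => ?_⟩
  have ht0 : 0 ≤ t := ht₁.le.trans ht.1
  have hs : a * t₁ ≤ a * t := mul_le_mul_of_nonneg_left ht.1 ha.le
  have hmean : |x + ρ * t - m₀| ≤ X + |ρ| * t₂ + |m₀| := by
    have hρt : |ρ * t| ≤ |ρ| * t₂ := by
      rw [abs_mul, abs_of_nonneg ht0]; exact mul_le_mul_of_nonneg_left ht.2 (abs_nonneg ρ)
    have := abs_sub (x + ρ * t) m₀
    have := abs_add_le x (ρ * t)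
    linarith
  have hs₂ : a * t ≤ a * t₂ := mul_le_mul_of_nonneg_left ht.2 ha.le
  set K := gaussRatio a ρ m₀ s₀ t x y
  set v := 1 + (y - (x + ρ * t)) ^ 2
  have hKv : v * K ≤ C₀ := hC₀ (x + ρ * t) (a * t) y hs hs₂ hmean
  have hK : 0 ≤ K := gaussRatio_nonneg (by linarith) t x y
  have hL : 0 ≤ L := by positivity
  have hC₀ : 0 ≤ C₀ := (mul_nonneg (by positivity) hK).trans hKv
  have key : ∀ w, |w| ≤ v * (1 + L) → |K * w| ≤ C₀ * (1 + L) := fun w hw => by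
    rw [abs_mul, abs_of_nonneg hK]
    calc K * |w| ≤ K * (v * (1 + L)) := by gcongr
      _ = v * K * (1 + L) := by ring
      _ ≤ C₀ * (1 + L) := by gcongr
  refine ⟨?_, key _ ?_, key _ ?_⟩
  · simpa using key 1 (by rw [abs_one]; nlinarith [sq_nonneg (y - (x + ρ * t))])
  · refine (abs_gaussScore_le hs₁ hs _ y).trans ?_
    rw [div_eq_mul_one_div]
    refine mul_le_mul_of_nonneg_left ?_ (by positivity)
    linarith [one_div_nonneg.2 (sq_nonneg (a * t₁))]
  · refine (abs_gaussScore2_le hs₁ hs _ y).trans ?_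
    exact mul_le_mul_of_nonneg_left (le_add_of_nonneg_left zero_le_one) (by positivity)

end gaussRatio

section integral

variable {μ : Measure ℝ} [IsFiniteMeasure μ] {a ρ m₀ s₀ t : ℝ}

lemma integrable_gaussRatio (ha : 0 < a) (ht : 0 < t) (hts : a * t < s₀) (x : ℝ) :
    Integrable (gaussRatio a ρ m₀ s₀ t x) μ := by
  obtain ⟨C, hC⟩ := exists_bound_gaussRatio (ρ := ρ) (m₀ := m₀) ha ht hts |x|
  exact .of_bound (continuous_gaussRatio ((mul_pos ha ht).trans hts) t x).aestronglyMeasurable C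
    (ae_of_all _ fun y => (hC t ⟨le_rfl, le_rfl⟩ x le_rfl y).1)

lemma abs_le_abs_add_one_of_mem_Ioo {x z : ℝ} (hz : z ∈ Ioo (x - 1) (x + 1)) : |z| ≤ |x| + 1 :=
  abs_le.2 ⟨by linarith [neg_abs_le x, hz.1], by linarith [le_abs_self x, hz.2]⟩

lemma hasDerivAt_integral_gaussRatio_x (ha : 0 < a) (ht : 0 < t) (hts : a * t < s₀) (x : ℝ) :
    Integrable (fun y => gaussRatio a ρ m₀ s₀ t x y * gaussScore (x + ρ * t) (a * t) y) μ ∧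
    HasDerivAt (fun x => ∫ y, gaussRatio a ρ m₀ s₀ t x y ∂μ)
      (∫ y, gaussRatio a ρ m₀ s₀ t x y * gaussScore (x + ρ * t) (a * t) y ∂μ) x := by
  have hs₀ : 0 < s₀ := (mul_pos ha ht).trans hts
  obtain ⟨C, hC⟩ := exists_bound_gaussRatio (ρ := ρ) (m₀ := m₀) ha ht hts (|x| + 1)
  exact hasDerivAt_integral_of_norm_deriv_le_const (Ioo_mem_nhds (by linarith) (by linarith))
    (fun z _ => (continuous_gaussRatio hs₀ t z).aestronglyMeasurable)
    (integrable_gaussRatio ha ht hts x)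
    ((continuous_gaussRatio hs₀ t x).mul (continuous_gaussScore _ _)).aestronglyMeasurable
    (fun z hz y => (hC t ⟨le_rfl, le_rfl⟩ z (abs_le_abs_add_one_of_mem_Ioo hz) y).2.1)
    (fun z _ y => hasDerivAt_gaussRatio_x (mul_pos ha ht) z y)

lemma hasDerivAt_integral_gaussRatio_mul_gaussScore_x (ha : 0 < a) (ht : 0 < t) (hts : a * t < s₀)
    (x : ℝ) :
    Integrable (fun y => gaussRatio a ρ m₀ s₀ t x y * gaussScore2 (x + ρ * t) (a * t) y) μ ∧
    HasDerivAt (fun x => ∫ y, gaussRatio a ρ m₀ s₀ t x y * gaussScore (x + ρ * t) (a * t) y ∂μ)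
      (∫ y, gaussRatio a ρ m₀ s₀ t x y * gaussScore2 (x + ρ * t) (a * t) y ∂μ) x := by
  have hs₀ : 0 < s₀ := (mul_pos ha ht).trans hts
  obtain ⟨C, hC⟩ := exists_bound_gaussRatio (ρ := ρ) (m₀ := m₀) ha ht hts (|x| + 1)
  exact hasDerivAt_integral_of_norm_deriv_le_const (Ioo_mem_nhds (by linarith) (by linarith))
    (fun z _ => ((continuous_gaussRatio hs₀ t z).mul
      (continuous_gaussScore (z + ρ * t) _)).aestronglyMeasurable)
    (hasDerivAt_integral_gaussRatio_x ha ht hts x).1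
    ((continuous_gaussRatio hs₀ t x).mul (continuous_gaussScore2 _ _)).aestronglyMeasurable
    (fun z hz y => (hC t ⟨le_rfl, le_rfl⟩ z (abs_le_abs_add_one_of_mem_Ioo hz) y).2.2)
    (fun z _ y => hasDerivAt_gaussRatio_mul_gaussScore_x (mul_pos ha ht) z y)

lemma hasDerivAt_integral_gaussRatio_t (ha : 0 < a) (ht : 0 < t) (hts : a * t < s₀) (x : ℝ) :
    HasDerivAt (fun t => ∫ y, gaussRatio a ρ m₀ s₀ t x y ∂μ)
      (∫ y, gaussRatio a ρ m₀ s₀ t x y *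
        (ρ * gaussScore (x + ρ * t) (a * t) y + a / 2 * gaussScore2 (x + ρ * t) (a * t) y) ∂μ)
      t := by
  have hs₀ : 0 < s₀ := (mul_pos ha ht).trans hts
  have ht₂ : t < (t + s₀ / a) / 2 := by
    have : t < s₀ / a := by rwa [lt_div_iff₀ ha, mul_comm]
    linarith
  have hat₂ : a * ((t + s₀ / a) / 2) < s₀ := by
    have : a * ((t + s₀ / a) / 2) = (a * t + s₀) / 2 := by field_simp
    linarith
  obtain ⟨C, hC⟩ := exists_bound_gaussRatio (ρ := ρ) (m₀ := m₀) ha (half_pos ht) hat₂ |x|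
  refine (hasDerivAt_integral_of_norm_deriv_le_const (C := |ρ| * C + |a / 2| * C)
    (Ioo_mem_nhds (half_lt_self ht) ht₂)
    (fun s _ => (continuous_gaussRatio hs₀ s x).aestronglyMeasurable)
    (integrable_gaussRatio ha ht hts x)
    ((continuous_gaussRatio hs₀ t x).mul (((continuous_gaussScore _ _).const_smul ρ).add
      ((continuous_gaussScore2 _ _).const_smul (a / 2)))).aestronglyMeasurable
    (fun s hs y => ?_)
    (fun s hs y => hasDerivAt_gaussRatio_t ha ((half_pos ht).trans hs.1) x y)).2
  obtain ⟨-, h₁, h₂⟩ := hC s (Ioo_subset_Icc_self hs) x le_rfl y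
  set K := gaussRatio a ρ m₀ s₀ s x y
  set S₁ := gaussScore (x + ρ * s) (a * s) y
  set S₂ := gaussScore2 (x + ρ * s) (a * s) y
  calc ‖K * (ρ * S₁ + a / 2 * S₂)‖ = |ρ * (K * S₁) + a / 2 * (K * S₂)| := by
        rw [Real.norm_eq_abs]; ring_nf
    _ ≤ |ρ| * |K * S₁| + |a / 2| * |K * S₂| :=
        (abs_add_le _ _).trans_eq (by rw [abs_mul ρ, abs_mul (a / 2)])
    _ ≤ |ρ| * C + |a / 2| * C := by gcongr

noncomputable def diffusionGenerator (a ρ : ℝ) (u : ℝ → ℝ) (x : ℝ) : ℝ :=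
  a / 2 * deriv (deriv u) x + ρ * deriv u x

theorem hasDerivAt_integral_gaussRatio (ha : 0 < a) (ht : 0 < t) (hts : a * t < s₀) (x : ℝ) :
    HasDerivAt (fun t => ∫ y, gaussRatio a ρ m₀ s₀ t x y ∂μ)
      (diffusionGenerator a ρ (fun x => ∫ y, gaussRatio a ρ m₀ s₀ t x y ∂μ) x) t := by
  have hderiv : deriv (fun x => ∫ y, gaussRatio a ρ m₀ s₀ t x y ∂μ)
      = fun x => ∫ y, gaussRatio a ρ m₀ s₀ t x y * gaussScore (x + ρ * t) (a * t) y ∂μ :=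
    funext fun z => (hasDerivAt_integral_gaussRatio_x ha ht hts z).2.deriv
  obtain ⟨hint₁, -⟩ := hasDerivAt_integral_gaussRatio_x (μ := μ) (ρ := ρ) (m₀ := m₀) ha ht hts x
  obtain ⟨hint₂, hderiv₂⟩ :=
    hasDerivAt_integral_gaussRatio_mul_gaussScore_x (μ := μ) (ρ := ρ) (m₀ := m₀) ha ht hts x
  refine (hasDerivAt_integral_gaussRatio_t ha ht hts x).congr_deriv ?_
  rw [diffusionGenerator, hderiv, hderiv₂.deriv, ← integral_const_mul, ← integral_const_mul,
    ← integral_add (hint₂.const_mul _) (hint₁.const_mul _)]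
  congr 1 with y
  ring

end integral

theorem deriv_exp_mul_of_hasDerivAt_diffusionGenerator {I : ℝ → ℝ → ℝ} {a ρ r θ x : ℝ}
    (hI : HasDerivAt (fun t => I t x) (diffusionGenerator a ρ (I θ) x) θ) :
    deriv (fun t => Real.exp (-(r * t)) * I t x) θ
      = diffusionGenerator a ρ (fun x => Real.exp (-(r * θ)) * I θ x) x
        - r * (Real.exp (-(r * θ)) * I θ x) := by
  have hexp : HasDerivAt (fun t => Real.exp (-(r * t))) (Real.exp (-(r * θ)) * -r) θ := by
    simpa using (((hasDerivAt_id θ).const_mul r).neg).exp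
  rw [(hexp.fun_mul hI).deriv]
  simp only [diffusionGenerator, deriv_const_mul_field']
  ring

theorem Psi_solves_BlackScholes_PDE_general
    (r σ T x0 : ℝ) (hσ : 0 < σ)
    (μ : Measure ℝ) [IsFiniteMeasure μ] :
    ∀ θ ∈ Set.Ioo (0 : ℝ) T, ∀ x : ℝ,
      Integrable (fun y => kern r σ x0 T θ x y) μ ∧
      deriv (fun t => Psi r σ x0 T μ t x) θ =
        σ ^ 2 / 2 * deriv (fun z => deriv (fun w => Psi r σ x0 T μ θ w) z) x
          + (r - σ ^ 2 / 2) * deriv (fun z => Psi r σ x0 T μ θ z) x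
          - r * Psi r σ x0 T μ θ x := by
  rintro θ ⟨hθ, hθT⟩ x
  have hσ2 : 0 < σ ^ 2 := by positivity
  have hvar : σ ^ 2 * θ < σ ^ 2 * T := mul_lt_mul_of_pos_left hθT hσ2
  exact ⟨integrable_gaussRatio hσ2 hθ hvar x, deriv_exp_mul_of_hasDerivAt_diffusionGenerator
    (I := fun t x => ∫ y, kern r σ x0 T t x y ∂μ) (hasDerivAt_integral_gaussRatio hσ2 hθ hvar x)⟩

/-- For a finite nonnegative measure `μ`, the function
`Ψ(θ,x) = e^{-rθ} ∫ N(x+r̂θ,σ²θ,y)/N(x0+r̂T,σ²T,y) μ(dy)` is well defined on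
`(0,T) × ℝ` and satisfies the Black–Scholes PDE
`D₁Ψ = (σ²/2) D₂₂Ψ + (r - σ²/2) D₂Ψ - rΨ` there. -/
theorem Psi_solves_BlackScholes_PDE
    (r σ T x0 : ℝ) (hr : 0 ≤ r) (hσ : 0 < σ) (hT : 0 < T)
    (μ : Measure ℝ) [IsFiniteMeasure μ] :
    ∀ θ ∈ Set.Ioo (0 : ℝ) T, ∀ x : ℝ,
      Integrable (fun y => kern r σ x0 T θ x y) μ ∧
      deriv (fun t => Psi r σ x0 T μ t x) θ =
        σ ^ 2 / 2 * deriv (fun z => deriv (fun w => Psi r σ x0 T μ θ w) z) x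
          + (r - σ ^ 2 / 2) * deriv (fun z => Psi r σ x0 T μ θ z) x
          - r * Psi r σ x0 T μ θ x :=
  Psi_solves_BlackScholes_PDE_general r σ T x0 hσ μ
end

section
/- Let f : ℝ → [0,∞) be measurable and upper semicontinuous, with v_f(θ,x) < ∞ for all (θ,x) ∈ [0,T]×ℝ. Then the embedded American payoff x ↦ am_T(f)(x) := inf_{θ∈[0,T]} v_f(θ,x) is upper semicontinuous on ℝ. -/
/-!
Each slice `x ↦ v_f(θ,x)` is upper semicontinuous: for `θ = 0` it is `f` itself, and for
`θ > 0` it is even continuous by dominated convergence, since a Gaussian density whose mean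
moves by at most `1` is dominated by a fixed multiple of the sum of the two Gaussians with the
extreme means, both integrable against `f` by hypothesis. As `v_f ≥ 0`, the infimum over `θ` of
this family of upper semicontinuous functions is again upper semicontinuous.
-/

open MeasureTheory Filter Set
open scoped ENNReal

/-- European value of a payoff function `f`:
`v_f(θ,x) = e^{-rθ} ∫ N(x+r̂θ,σ²θ,y) f(y) dy` for `θ > 0`, `v_f(0,x) = f(x)`. -/
noncomputable def vEu (r σ : ℝ) (f : ℝ → ℝ) (θ x : ℝ) : ℝ :=
  if θ = 0 then f x
  else Real.exp (-(r * θ)) * ∫ y, gauss (x + (r - σ ^ 2 / 2) * θ) (σ ^ 2 * θ) y * f y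

lemma gauss_nonneg (m s2 y : ℝ) : 0 ≤ gauss m s2 y :=
  mul_nonneg (inv_nonneg.2 (Real.sqrt_nonneg _)) (Real.exp_pos _).le

lemma continuous_gauss_mean (s2 y : ℝ) : Continuous fun m => gauss m s2 y := by
  unfold gauss
  fun_prop

lemma gauss_le_exp_mul_gauss {s2 m m' y : ℝ} (hs2 : 0 < s2)
    (h : (y - m') ^ 2 ≤ (y - m) ^ 2 + 1) :
    gauss m s2 y ≤ Real.exp (1 / (2 * s2)) * gauss m' s2 y := by
  unfold gauss
  rw [mul_left_comm, ← Real.exp_add, ← add_div]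
  gcongr
  linarith

lemma gauss_le_of_abs_sub_le {s2 m m₀ : ℝ} (hs2 : 0 < s2) (hm : |m - m₀| ≤ 1) (y : ℝ) :
    gauss m s2 y ≤
      Real.exp (1 / (2 * s2)) * (gauss (m₀ + 1) s2 y + gauss (m₀ - 1) s2 y) := by
  obtain ⟨hm₁, hm₂⟩ := abs_le.1 hm
  have hK : 0 ≤ Real.exp (1 / (2 * s2)) := (Real.exp_pos _).le
  rw [mul_add]
  rcases le_or_gt m₀ y with hy | hy
  · have h := gauss_le_exp_mul_gauss (m := m) (m' := m₀ + 1) (y := y) hs2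
      (by nlinarith [mul_nonneg (sub_nonneg.2 hy) (sub_nonneg.2 hm₂)])
    linarith [mul_nonneg hK (gauss_nonneg (m₀ - 1) s2 y)]
  · have h := gauss_le_exp_mul_gauss (m := m) (m' := m₀ - 1) (y := y) hs2
      (by nlinarith [mul_nonneg (sub_nonneg.2 hy.le) (neg_le_iff_add_nonneg.1 hm₁)])
    linarith [mul_nonneg hK (gauss_nonneg (m₀ + 1) s2 y)]

lemma continuous_integral_gauss_mul {s2 : ℝ} (hs2 : 0 < s2) {g : ℝ → ℝ}
    (hg : ∀ m, Integrable fun y => gauss m s2 y * g y) :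
    Continuous fun m => ∫ y, gauss m s2 y * g y := by
  refine continuous_iff_continuousAt.2 fun m₀ => ?_
  set K := Real.exp (1 / (2 * s2))
  have norm_eq (m y : ℝ) : ‖gauss m s2 y * g y‖ = gauss m s2 y * ‖g y‖ := by
    rw [norm_mul, Real.norm_of_nonneg (gauss_nonneg _ _ _)]
  apply continuousAt_of_dominated
    (bound := fun y => K * (gauss (m₀ + 1) s2 y * ‖g y‖ + gauss (m₀ - 1) s2 y * ‖g y‖))
  · exact Eventually.of_forall fun m => (hg m).aestronglyMeasurable
  · filter_upwards [Metric.closedBall_mem_nhds m₀ one_pos] with m hm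
    refine Eventually.of_forall fun y => ?_
    rw [norm_eq, ← add_mul, ← mul_assoc]
    exact mul_le_mul_of_nonneg_right
      (gauss_le_of_abs_sub_le hs2 (Metric.mem_closedBall.1 hm) y) (norm_nonneg _)
  · refine (((hg (m₀ + 1)).norm.add (hg (m₀ - 1)).norm).const_mul K).congr ?_
    exact Eventually.of_forall fun y => by simp only [Pi.add_apply, norm_eq]
  · exact Eventually.of_forall fun y =>
      ((continuous_gauss_mean s2 y).mul continuous_const).continuousAt

lemma vEu_nonneg {r σ : ℝ} {f : ℝ → ℝ} (hf : ∀ x, 0 ≤ f x) (θ x : ℝ) :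
    0 ≤ vEu r σ f θ x := by
  unfold vEu
  split
  · exact hf x
  · exact mul_nonneg (Real.exp_pos _).le
      (integral_nonneg fun y => mul_nonneg (gauss_nonneg _ _ _) (hf y))

lemma continuous_vEu {r σ θ : ℝ} {f : ℝ → ℝ} (hσ : σ ≠ 0) (hθ : 0 < θ)
    (hf : ∀ x, Integrable fun y => gauss (x + (r - σ ^ 2 / 2) * θ) (σ ^ 2 * θ) y * f y) :
    Continuous (vEu r σ f θ) := by
  have hs2 : 0 < σ ^ 2 * θ := by positivity
  have hg (m : ℝ) : Integrable fun y => gauss m (σ ^ 2 * θ) y * f y := by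
    have h := hf (m - (r - σ ^ 2 / 2) * θ)
    rwa [sub_add_cancel] at h
  unfold vEu
  simp only [hθ.ne', if_false]
  exact continuous_const.mul
    ((continuous_integral_gauss_mul hs2 hg).comp (continuous_add_const _))

lemma upperSemicontinuous_vEu {r σ θ : ℝ} {f : ℝ → ℝ} (hσ : σ ≠ 0)
    (hfusc : UpperSemicontinuous f) (hθ : 0 ≤ θ)
    (hf : 0 < θ →
      ∀ x, Integrable fun y => gauss (x + (r - σ ^ 2 / 2) * θ) (σ ^ 2 * θ) y * f y) :
    UpperSemicontinuous (vEu r σ f θ) := by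
  rcases hθ.eq_or_lt with rfl | hθ
  · rwa [show vEu r σ f 0 = f from funext fun _ => if_pos rfl]
  · exact (continuous_vEu hσ hθ (hf hθ)).upperSemicontinuous

theorem embedded_American_upperSemicontinuous_general
    (r σ T : ℝ) (hσ : 0 < σ)
    (f : ℝ → ℝ) (hf0 : ∀ x, 0 ≤ f x)
    (hfusc : UpperSemicontinuous f)
    (hfint : ∀ θ ∈ Set.Ioc (0 : ℝ) T, ∀ x : ℝ,
      Integrable (fun y => gauss (x + (r - σ ^ 2 / 2) * θ) (σ ^ 2 * θ) y * f y)) :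
    UpperSemicontinuous (fun x => ⨅ θ : Set.Icc (0 : ℝ) T, vEu r σ f θ.1 x) := by
  refine upperSemicontinuous_ciInf (fun x => ⟨0, ?_⟩) fun θ => ?_
  · rintro _ ⟨θ, rfl⟩
    exact vEu_nonneg hf0 _ _
  · exact upperSemicontinuous_vEu hσ.ne' hfusc θ.2.1 fun hθ => hfint θ ⟨hθ, θ.2.2⟩

/-- If `f` is a nonnegative, measurable, upper semicontinuous
payoff whose European value is finite on `[0,T] × ℝ`, then the embedded
American payoff `am_T(f)(x) = inf_{θ∈[0,T]} v_f(θ,x)` is upper semicontinuous. -/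
theorem embedded_American_upperSemicontinuous
    (r σ T : ℝ) (hr : 0 ≤ r) (hσ : 0 < σ) (hT : 0 < T)
    (f : ℝ → ℝ) (hfm : Measurable f) (hf0 : ∀ x, 0 ≤ f x)
    (hfusc : UpperSemicontinuous f)
    (hfint : ∀ θ ∈ Set.Ioc (0 : ℝ) T, ∀ x : ℝ,
      Integrable (fun y => gauss (x + (r - σ ^ 2 / 2) * θ) (σ ^ 2 * θ) y * f y)) :
    UpperSemicontinuous (fun x => ⨅ θ : Set.Icc (0 : ℝ) T, vEu r σ f θ.1 x) :=
  embedded_American_upperSemicontinuous_general r σ T hσ f hf0 hfusc hfint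
end
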